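/- arXiv:1910.12797 — 5 statements merged into one kernel-verified Lean document; each statement's English description precedes it below -/
import Mathlib

section
/- For all real t, φ(t)/(max(1,t) · (1 - Φ(t))) ≤ 20, where φ and Φ are the standard normal density and CDF respectively. -/
noncomputable def stdNormalPDF (x : ℝ) : ℝ :=
  (Real.sqrt (2 * Real.pi))⁻¹ * Real.exp (-x ^ 2 / 2)

noncomputable def stdNormalCDF (t : ℝ) : ℝ :=
  ∫ x in Set.Iic t, stdNormalPDF x

open MeasureTheory Real Set

lemma pdf_pos (x : ℝ) : 0 < stdNormalPDF x := by
  unfold stdNormalPDF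
  positivity

lemma pdf_eq (x : ℝ) : stdNormalPDF x
    = (Real.sqrt (2 * Real.pi))⁻¹ * Real.exp (-(1/2) * x ^ 2) := by
  unfold stdNormalPDF; ring_nf

lemma pdf_integrable : Integrable stdNormalPDF := by
  have := (integrable_exp_neg_mul_sq (b := 1/2) (by norm_num)).const_mul
    (Real.sqrt (2 * Real.pi))⁻¹
  refine this.congr ?_
  filter_upwards with x
  rw [pdf_eq]

lemma pdf_mono {a b : ℝ} (h0 : 0 ≤ a) (hab : a ≤ b) :
    stdNormalPDF b ≤ stdNormalPDF a := by
  unfold stdNormalPDF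
  have : Real.exp (-b ^ 2 / 2) ≤ Real.exp (-a ^ 2 / 2) := by
    apply Real.exp_le_exp.2
    nlinarith
  have h : (0:ℝ) < (Real.sqrt (2 * Real.pi))⁻¹ := by positivity
  nlinarith

lemma integral_pdf : ∫ x, stdNormalPDF x = 1 := by
  have h : ∫ x, stdNormalPDF x
      = (Real.sqrt (2 * Real.pi))⁻¹ * ∫ x, Real.exp (-(1/2) * x ^ 2) := by
    rw [← integral_const_mul]
    congr 1 with x
    rw [pdf_eq]
  rw [h, integral_gaussian]
  have h2 : Real.pi / (1/2) = 2 * Real.pi := by ring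
  rw [h2, inv_mul_cancel₀]
  positivity

lemma one_sub_cdf (t : ℝ) :
    1 - stdNormalCDF t = ∫ x in Set.Ioi t, stdNormalPDF x := by
  have := intervalIntegral.integral_Iic_add_Ioi (b := t) (f := stdNormalPDF)
    (μ := volume) pdf_integrable.integrableOn pdf_integrable.integrableOn
  rw [integral_pdf] at this
  unfold stdNormalCDF
  linarith

lemma tail_lb (t a b : ℝ) (h0 : 0 ≤ a) (hta : t ≤ a) (hab : a ≤ b) :
    (b - a) * stdNormalPDF b ≤ ∫ x in Set.Ioi t, stdNormalPDF x := by
  have h1 : (b - a) * stdNormalPDF b ≤ ∫ x in Set.Ioc a b, stdNormalPDF x := by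
    have hc : ∫ _x in Set.Ioc a b, stdNormalPDF b = (b - a) * stdNormalPDF b := by
      rw [setIntegral_const, measureReal_def, Real.volume_Ioc, ENNReal.toReal_ofReal (by linarith),
        smul_eq_mul]
    rw [← hc]
    apply setIntegral_mono_on
    · exact integrableOn_const (by rw [Real.volume_Ioc]; exact ENNReal.ofReal_ne_top)
    · exact pdf_integrable.integrableOn
    · exact measurableSet_Ioc
    · intro x hx
      exact pdf_mono (by linarith [hx.1]) hx.2
  refine h1.trans ?_
  apply setIntegral_mono_set pdf_integrable.integrableOn
  · filter_upwards with x using (pdf_pos x).le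
  · filter_upwards with x hx
    exact lt_of_le_of_lt hta hx.1

theorem mills_ratio_bound (t : ℝ) :
    stdNormalPDF t / (max 1 t * (1 - stdNormalCDF t)) ≤ 20 := by
  have hpi : (0:ℝ) < Real.sqrt (2 * Real.pi) := by positivity
  rcases le_total t 1 with ht | ht
  · -- t ≤ 1 case
    rw [max_eq_left ht, one_mul, one_sub_cdf]
    have hlb := tail_lb t 1 2 (by norm_num) ht (by norm_num)
    have hD : (0:ℝ) < ∫ x in Set.Ioi t, stdNormalPDF x :=
      lt_of_lt_of_le (by nlinarith [pdf_pos 2]) hlb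
    rw [div_le_iff₀ hD]
    have h1 : stdNormalPDF t ≤ (Real.sqrt (2 * Real.pi))⁻¹ := by
      unfold stdNormalPDF
      have : Real.exp (-t ^ 2 / 2) ≤ 1 := by
        rw [← Real.exp_zero]
        apply Real.exp_le_exp.2; nlinarith
      nlinarith [inv_pos.2 hpi]
    have h2 : (Real.sqrt (2 * Real.pi))⁻¹ ≤ 20 * ((2 - 1) * stdNormalPDF 2) := by
      unfold stdNormalPDF
      have he : Real.exp 2 ≤ 20 := by
        have := Real.exp_one_lt_d9
        calc Real.exp 2 = Real.exp 1 * Real.exp 1 := by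
              rw [← Real.exp_add]; norm_num
          _ ≤ 2.7182818286 * 2.7182818286 := by nlinarith [Real.exp_pos 1]
          _ ≤ 20 := by norm_num
      have hrw : (20 : ℝ) * ((2 - 1) * ((Real.sqrt (2 * Real.pi))⁻¹ * Real.exp (-2 ^ 2 / 2)))
          = (Real.sqrt (2 * Real.pi))⁻¹ * (20 * Real.exp (-(2:ℝ)))  := by ring_nf
      rw [hrw]
      have h20 : (1:ℝ) ≤ 20 * Real.exp (-(2:ℝ)) := by
        rw [Real.exp_neg]
        nlinarith [inv_pos.2 (Real.exp_pos 2),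
          mul_inv_cancel₀ (ne_of_gt (Real.exp_pos 2))]
      nlinarith [inv_pos.2 hpi]
    calc stdNormalPDF t ≤ (Real.sqrt (2 * Real.pi))⁻¹ := h1
      _ ≤ 20 * ((2 - 1) * stdNormalPDF 2) := h2
      _ ≤ 20 * ∫ x in Set.Ioi t, stdNormalPDF x := by linarith
  · -- 1 ≤ t case
    rw [max_eq_right ht, one_sub_cdf]
    have htpos : (0:ℝ) < t := by linarith
    have hlb := tail_lb t t (t + 1/t) htpos.le le_rfl (le_add_of_nonneg_right (by positivity))
    have hb : t + 1/t - t = 1/t := by ring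
    rw [hb] at hlb
    have hD : (0:ℝ) < ∫ x in Set.Ioi t, stdNormalPDF x :=
      lt_of_lt_of_le (mul_pos (by positivity) (pdf_pos _)) hlb
    rw [div_le_iff₀ (mul_pos htpos hD)]
    -- need stdNormalPDF t ≤ 20 * (t * D), D ≥ (1/t) * pdf (t+1/t)
    have key : stdNormalPDF t ≤ 20 * (t * (1/t * stdNormalPDF (t + 1/t))) := by
      have ht' : t * (1/t * stdNormalPDF (t + 1/t)) = stdNormalPDF (t + 1/t) := by
        field_simp
      rw [ht']
      unfold stdNormalPDF
      rw [mul_comm (20:ℝ), mul_assoc]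
      apply mul_le_mul_of_nonneg_left _ (by positivity)
      -- exp(-t²/2) ≤ exp(-(t+1/t)²/2) * 20
      have hexp : Real.exp (-t ^ 2 / 2) = Real.exp (-(t + 1/t) ^ 2 / 2)
          * Real.exp (1 + 1/(2*t^2)) := by
        rw [← Real.exp_add]
        congr 1
        field_simp
        ring
      rw [hexp]
      apply mul_le_mul_of_nonneg_left _ (Real.exp_pos _).le
      have h12 : (1:ℝ) + 1/(2*t^2) ≤ 2 := by
        have : (1:ℝ)/(2*t^2) ≤ 1 := by
          rw [div_le_one (by positivity)]; nlinarith
        linarith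
      calc Real.exp (1 + 1/(2*t^2)) ≤ Real.exp 2 := Real.exp_le_exp.2 h12
        _ ≤ 20 := by
            have := Real.exp_one_lt_d9
            calc Real.exp 2 = Real.exp 1 * Real.exp 1 := by
                  rw [← Real.exp_add]; norm_num
              _ ≤ 2.7182818286 * 2.7182818286 := by nlinarith [Real.exp_pos 1]
              _ ≤ 20 := by norm_num
    calc stdNormalPDF t ≤ 20 * (t * (1/t * stdNormalPDF (t + 1/t))) := key
      _ ≤ 20 * (t * ∫ x in Set.Ioi t, stdNormalPDF x) := by
          apply mul_le_mul_of_nonneg_left _ (by norm_num)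
          exact mul_le_mul_of_nonneg_left hlb htpos.le
end

section
/- For r, s > 0, the maximum of 2√r·|u| - 2(√(r+s) - √s)·|v + √(r+s)| over pairs (u,v) with u² + v² = 1 equals 2√r·√(1-r-s) if 2(1-r-s)(r+s-√s·√(r+s)) > r, and equals 2√(2(r+s-√s·√(r+s))) - 2(r+s-√s·√(r+s)) if 2(1-r-s)(r+s-√s·√(r+s)) ≤ r. -/
/-!
Write `a = √r`, `C = √(r + s)` and `b = √(r + s) - √s`, so that `a² + b² = 2bC = 2(r + s - √s √(r + s))`
and the objective is `2a|u| - 2b|v + C|`. For every `c` with `|c| ≤ b` we have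
`-b|v + C| ≤ -c(v + C)`, and Cauchy–Schwarz on the unit circle gives the upper bound
`2√(a² + c²) - 2cC`. Taking `c = b` gives `2√(a² + b²) - 2bC`, attained at `(a, -b)/√(a² + b²)`
as long as that point lies on the side `v + C ≥ 0`, i.e. `b ≤ C√(a² + b²)`. Otherwise the maximum
sits on the kink `v = -C`: taking `c = aC/√(1 - C²)` gives `2a√(1 - C²)`, attained at
`(√(1 - C²), -C)`. The case distinction is the sign of `b² - C²(a² + b²)`, which in terms of `r, s` is
`2(1 - r - s)(r + s - √s √(r + s)) - r`.
-/

open Real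

def kinkValues (a b C : ℝ) : Set ℝ :=
  {y | ∃ u v : ℝ, u ^ 2 + v ^ 2 = 1 ∧ y = 2 * a * |u| - 2 * b * |v + C|}

lemma mul_add_mul_le_sqrt_sq_add_sq {x y : ℝ} (a c : ℝ) (h : x ^ 2 + y ^ 2 = 1) :
    a * x + c * y ≤ √(a ^ 2 + c ^ 2) :=
  (le_abs_self _).trans <| abs_le_sqrt <| by nlinarith [sq_nonneg (a * y - c * x)]

lemma le_of_mem_kinkValues {a b c C y : ℝ} (hc : |c| ≤ b) (hy : y ∈ kinkValues a b C) :
    y ≤ 2 * √(a ^ 2 + c ^ 2) - 2 * c * C := by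
  obtain ⟨u, v, huv, rfl⟩ := hy
  have hkink : c * (v + C) ≤ b * |v + C| :=
    (le_abs_self _).trans <| (abs_mul c _).trans_le <| mul_le_mul_of_nonneg_right hc (abs_nonneg _)
  have hcs : a * |u| + (-c) * v ≤ √(a ^ 2 + (-c) ^ 2) :=
    mul_add_mul_le_sqrt_sq_add_sq a (-c) (by rw [sq_abs]; exact huv)
  rw [neg_sq] at hcs
  linarith

theorem isGreatest_kinkValues_of_sq_le {a b C : ℝ} (ha : 0 < a) (hb : 0 ≤ b)
    (h : C ^ 2 * (a ^ 2 + b ^ 2) ≤ b ^ 2) :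
    IsGreatest (kinkValues a b C) (2 * a * √(1 - C ^ 2)) := by
  have hC : C ^ 2 < 1 := by nlinarith
  set W := √(1 - C ^ 2)
  have hW2 : W ^ 2 = 1 - C ^ 2 := sq_sqrt (by linarith)
  have hW : 0 < W := sqrt_pos.2 (by linarith)
  refine ⟨⟨W, -C, by linarith, by simp [abs_of_pos hW]⟩, fun y hy => ?_⟩
  have hc : |a * C / W| ≤ b := abs_le_of_sq_le_sq (by
    rw [div_pow, div_le_iff₀ (by positivity), hW2]; nlinarith) hb
  have hnorm : √(a ^ 2 + (a * C / W) ^ 2) = a / W := by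
    rw [sqrt_eq_iff_mul_self_eq_of_pos (by positivity)]
    field_simp
    linear_combination -hW2
  calc y ≤ 2 * √(a ^ 2 + (a * C / W) ^ 2) - 2 * (a * C / W) * C := le_of_mem_kinkValues hc hy
    _ = 2 * a * W := by
      rw [hnorm]
      field_simp
      exact hW2.symm

theorem isGreatest_kinkValues_of_le_sq {a b C : ℝ} (ha : 0 < a) (hb : 0 ≤ b) (hC : 0 ≤ C)
    (h : b ^ 2 ≤ C ^ 2 * (a ^ 2 + b ^ 2)) :
    IsGreatest (kinkValues a b C) (2 * √(a ^ 2 + b ^ 2) - 2 * b * C) := by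
  set R := √(a ^ 2 + b ^ 2)
  have hR2 : R ^ 2 = a ^ 2 + b ^ 2 := sq_sqrt (by positivity)
  have hR : 0 < R := sqrt_pos.2 (by positivity)
  have hside : b / R ≤ C := by
    rw [div_le_iff₀ hR]
    exact le_of_sq_le_sq (by rw [mul_pow, hR2]; linarith) (by positivity)
  refine ⟨⟨a / R, -(b / R), ?_, ?_⟩, fun y hy => le_of_mem_kinkValues (abs_of_nonneg hb).le hy⟩
  · field_simp
    exact hR2.symm
  · rw [abs_of_pos (by positivity), neg_add_eq_sub, abs_of_nonneg (sub_nonneg.2 hside)]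
    field_simp
    linear_combination hR2

theorem opt5 (r s : ℝ) (hr : 0 < r) (hs : 0 < s) :
    (2 * (1 - r - s) * (r + s - Real.sqrt s * Real.sqrt (r + s)) > r →
      IsGreatest
        {y : ℝ | ∃ u v : ℝ, u ^ 2 + v ^ 2 = 1 ∧
          y = 2 * Real.sqrt r * |u|
              - 2 * (Real.sqrt (r + s) - Real.sqrt s) * |v + Real.sqrt (r + s)|}
        (2 * Real.sqrt r * Real.sqrt (1 - r - s))) ∧
    (2 * (1 - r - s) * (r + s - Real.sqrt s * Real.sqrt (r + s)) ≤ r →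
      IsGreatest
        {y : ℝ | ∃ u v : ℝ, u ^ 2 + v ^ 2 = 1 ∧
          y = 2 * Real.sqrt r * |u|
              - 2 * (Real.sqrt (r + s) - Real.sqrt s) * |v + Real.sqrt (r + s)|}
        (2 * Real.sqrt (2 * (r + s - Real.sqrt s * Real.sqrt (r + s)))
          - 2 * (r + s - Real.sqrt s * Real.sqrt (r + s)))) := by
  have hA2 : √r ^ 2 = r := sq_sqrt hr.le
  have hB2 : √s ^ 2 = s := sq_sqrt hs.le
  have hC2 : √(r + s) ^ 2 = r + s := sq_sqrt (by linarith)
  have hb : 0 ≤ √(r + s) - √s := sub_nonneg.2 (sqrt_le_sqrt (by linarith))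
  have hnorm : 2 * (r + s - √s * √(r + s)) = √r ^ 2 + (√(r + s) - √s) ^ 2 := by
    linear_combination -hA2 - hB2 - hC2
  have hcond : 2 * (1 - r - s) * (r + s - √s * √(r + s)) - r
      = (√(r + s) - √s) ^ 2 - √(r + s) ^ 2 * (√r ^ 2 + (√(r + s) - √s) ^ 2) := by
    linear_combination √(r + s) ^ 2 * hA2 + (√(r + s) ^ 2 - 1) * hB2
      + (2 * (r + s - √s * √(r + s)) + √(r + s) ^ 2 - 1) * hC2
  constructor
  · intro h
    have hmax := isGreatest_kinkValues_of_sq_le (sqrt_pos.2 hr) hb (by linarith)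
    rwa [hC2, ← sub_sub] at hmax
  · intro h
    have hmax := isGreatest_kinkValues_of_le_sq (sqrt_pos.2 hr) hb (sqrt_nonneg _) (by linarith)
    have hbC : (√(r + s) - √s) * √(r + s) = r + s - √s * √(r + s) := by
      linear_combination hC2
    rwa [← hnorm, mul_assoc 2 (√(r + s) - √s), hbC] at hmax
end

section
/- For r, s > 0, the condition 2(1-r-s)(r+s-√s·√(r+s)) ≤ r implies r+s+√s·√(r+s) ≥ √(2(r+s-√s·√(r+s))) - (r+s-√s·√(r+s)). -/
/-! Write `t = r + s` and `u = √s √(r + s)`, so that `(t - u)(t + u) = r t`. Multiplying the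
hypothesis `2 (1 - t)(t - u) ≤ r` by `t` and cancelling `t - u > 0` gives `2 (1 - t) t ≤ t + u`,
that is `t - u ≤ 2 t²`. Hence `√(2 (t - u)) ≤ 2 t`, which is the claim rearranged. -/

namespace Real

lemma sqrt_mul_sqrt_add_le {r s : ℝ} (hr : 0 ≤ r) (hs : 0 ≤ s) : √s * √(r + s) ≤ r + s :=
  calc √s * √(r + s) ≤ √(r + s) * √(r + s) := by gcongr; linarith
    _ = r + s := mul_self_sqrt (by linarith)

lemma sub_sqrt_mul_sqrt_mul_add {r s : ℝ} (hs : 0 ≤ s) (hrs : 0 ≤ r + s) :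
    (r + s - √s * √(r + s)) * (r + s + √s * √(r + s)) = r * (r + s) := by
  linear_combination -(√(r + s) * √(r + s)) * mul_self_sqrt hs - s * mul_self_sqrt hrs

lemma sqrt_two_mul_le_two_mul {x t : ℝ} (ht : 0 ≤ t) (hx : x ≤ 2 * t ^ 2) : √(2 * x) ≤ 2 * t :=
  sqrt_le_iff.mpr ⟨by linarith, by linarith⟩

end Real

lemma sub_le_two_mul_sq_of_mul_le {r t u : ℝ} (ht : 0 < t) (hut : u ≤ t)
    (hprod : (t - u) * (t + u) = r * t) (h : 2 * (1 - t) * (t - u) ≤ r) :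
    t - u ≤ 2 * t ^ 2 := by
  rcases hut.lt_or_eq with hlt | rfl
  · have hmul : (t - u) * (2 * (1 - t) * t) ≤ (t - u) * (t + u) := by
      rw [hprod]
      linear_combination mul_le_mul_of_nonneg_right h ht.le
    have := le_of_mul_le_mul_left hmul (sub_pos.mpr hlt)
    linarith
  · simp only [sub_self]
    positivity

theorem cond_implies_ge (r s : ℝ) (hr : 0 < r) (hs : 0 < s)
    (h : 2 * (1 - r - s) * (r + s - Real.sqrt s * Real.sqrt (r + s)) ≤ r) :
    r + s + Real.sqrt s * Real.sqrt (r + s) ≥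
      Real.sqrt (2 * (r + s - Real.sqrt s * Real.sqrt (r + s)))
        - (r + s - Real.sqrt s * Real.sqrt (r + s)) := by
  have hut := Real.sqrt_mul_sqrt_add_le hr.le hs.le
  have hprod := Real.sub_sqrt_mul_sqrt_mul_add hs.le (by positivity : 0 ≤ r + s)
  have hgap := sub_le_two_mul_sq_of_mul_le (by positivity) hut hprod (by linarith)
  have hsqrt := Real.sqrt_two_mul_le_two_mul (by positivity : 0 ≤ r + s) hgap
  linarith
end

section
/- For r, s > 0 with r + s < 1, the condition 2(1-r-s)(r+s-√s·√(r+s)) > r implies √(r(1-r-s)) > r + s + √s·√(r+s). -/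
/-!
Substitute `u = √s` and `v = √(r + s)`, so that `s = u²`, `r = v² - u²` and `√s·√(r+s) = uv`
with `0 ≤ u < v`. The hypothesis minus `r` factors as `(v - u)(v - u - 2v³)` and the square of
the conclusion's right-hand side, subtracted from `r(1 - r - s)`, as `(v + u)(v - u - 2v³)`;
so both say `u + 2v³ < v`.
-/

lemma sq_sub_sq_lt_two_mul_one_sub_sq_mul_iff {u v : ℝ} (huv : u < v) :
    v ^ 2 - u ^ 2 < 2 * (1 - v ^ 2) * (v ^ 2 - u * v) ↔ u + 2 * v ^ 3 < v := by
  have hfactor : 2 * (1 - v ^ 2) * (v ^ 2 - u * v) - (v ^ 2 - u ^ 2)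
      = (v - u) * (v - u - 2 * v ^ 3) := by ring
  rw [← sub_pos, hfactor, mul_pos_iff_of_pos_left (sub_pos.2 huv), sub_pos,
    lt_sub_iff_add_lt']

lemma sq_add_mul_sq_lt_sq_sub_sq_mul_one_sub_sq_iff {u v : ℝ} (huv : 0 < v + u) :
    (v ^ 2 + u * v) ^ 2 < (v ^ 2 - u ^ 2) * (1 - v ^ 2) ↔ u + 2 * v ^ 3 < v := by
  have hfactor : (v ^ 2 - u ^ 2) * (1 - v ^ 2) - (v ^ 2 + u * v) ^ 2
      = (v + u) * (v - u - 2 * v ^ 3) := by ring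
  rw [← sub_pos, hfactor, mul_pos_iff_of_pos_left huv, sub_pos, lt_sub_iff_add_lt']

theorem cond_implies_gt_general (r s : ℝ) (hr : 0 < r) (hs : 0 < s)
    (h : 2 * (1 - r - s) * (r + s - Real.sqrt s * Real.sqrt (r + s)) > r) :
    Real.sqrt (r * (1 - r - s)) > r + s + Real.sqrt s * Real.sqrt (r + s) := by
  set u := Real.sqrt s
  set v := Real.sqrt (r + s)
  have hu : 0 ≤ u := Real.sqrt_nonneg s
  have hs_eq : s = u ^ 2 := (Real.sq_sqrt hs.le).symm
  have ht_eq : r + s = v ^ 2 := (Real.sq_sqrt (by linarith)).symm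
  have hr_eq : r = v ^ 2 - u ^ 2 := by linarith
  have h1 : 1 - r - s = 1 - v ^ 2 := by linarith
  have huv : u < v := Real.sqrt_lt_sqrt hs.le (by linarith)
  have hkey : u + 2 * v ^ 3 < v := by
    rw [← sq_sub_sq_lt_two_mul_one_sub_sq_mul_iff huv, ← hr_eq, ← h1, ← ht_eq]
    exact h
  rw [gt_iff_lt, Real.lt_sqrt (by positivity), ht_eq, h1, hr_eq]
  exact (sq_add_mul_sq_lt_sq_sub_sq_mul_one_sub_sq_iff (by linarith)).2 hkey

theorem cond_implies_gt (r s : ℝ) (hr : 0 < r) (hs : 0 < s) (hrs : r + s < 1)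
    (h : 2 * (1 - r - s) * (r + s - Real.sqrt s * Real.sqrt (r + s)) > r) :
    Real.sqrt (r * (1 - r - s)) > r + s + Real.sqrt s * Real.sqrt (r + s) :=
  cond_implies_gt_general r s hr hs h
end

section
/- Let U, V be independent with U ~ N(0,1) and V ~ N(μ, 1) where μ = √(2(r+s) log n), r,s > 0, n ≥ 3. Then for any t > r + s + √s·√(r+s), there exist constants c, C > 0 (depending only on r, s, t) such that (c/log n)·n^{-(t² + r(r+s))/r} ≤ P(|√r·U + √s·V| - √(r+s)·|V| > t√(2 log n)) ≤ (C/log n)·n^{-(t² + r(r+s))/r}. -/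
/-!
Write `a = √r`, `b = √s`, `m = √(r + s)` and `S = √(2 log n)`, so that `V ~ N(mS, 1)` and
the claimed rate is `S⁻² exp (-(t²/a² + m²) S²/2)`.

Upper bound: since `|aU + bV| ≤ a|U| + b|V|`, the event forces `|U| > (tS + (m - b)|V|)/a`.
Mills' bound `P(|U| > x) ≤ 2φ(x)/x` turns the probability into an integral against the density
of `V`, and completing the square bounds the integrand by a constant times
`S⁻¹ exp (-(t²/a² + m²) S²/2 - κ S |v|)` with `κ = ((m - b)t - a²m)/a²`. The hypothesis on
`t` is exactly `κ > 0`, and integrating over `v` contributes the second factor `S⁻¹`.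

Lower bound: the event contains the box `U > (tS + m/S)/a`, `0 < V ≤ 1/S`, whose two factors
have probabilities of order `S⁻¹ exp (-t²S²/(2a²))` (Mills' lower bound) and
`S⁻¹ exp (-m²S²/2)`.
-/

open MeasureTheory ProbabilityTheory Real Set Filter

lemma lintegral_exp_neg_mul_abs {k : ℝ} (hk : 0 < k) :
    ∫⁻ v : ℝ, ENNReal.ofReal (exp (-k * |v|)) = ENNReal.ofReal (2 / k) := by
  have h : ∫ v : ℝ, exp (-k * |v|) = 2 / k := by
    rw [integral_comp_abs (f := fun v => exp (-k * v)), integral_exp_mul_Ioi (by linarith) 0]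
    field_simp
    simp
  rw [← h, ofReal_integral_eq_lintegral_ofReal]
  · exact Integrable.of_integral_ne_zero (by rw [h]; positivity)
  · exact ae_of_all _ fun v => (exp_pos _).le

section StandardGaussian

lemma gaussianPDFReal_zero_one (x : ℝ) :
    gaussianPDFReal 0 1 x = (√(2 * π))⁻¹ * exp (-x ^ 2 / 2) := by
  simp [gaussianPDFReal]

lemma gaussianPDFReal_zero_one_le_of_abs_le {x y : ℝ} (h : |y| ≤ |x|) :
    gaussianPDFReal 0 1 x ≤ gaussianPDFReal 0 1 y := by
  rw [gaussianPDFReal_zero_one, gaussianPDFReal_zero_one]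
  gcongr _ * exp ?_
  linarith [sq_le_sq.2 h]

lemma hasDerivAt_neg_gaussianPDFReal_zero_one (x : ℝ) :
    HasDerivAt (fun u => -gaussianPDFReal 0 1 u) (x * gaussianPDFReal 0 1 x) x := by
  have hexponent : HasDerivAt (fun u : ℝ => -u ^ 2 / 2) (-x) x :=
    ((hasDerivAt_pow 2 x).fun_neg.div_const 2).congr_deriv (by ring)
  simp only [gaussianPDFReal_zero_one]
  exact (hexponent.exp.const_mul _).fun_neg.congr_deriv (by ring)

lemma tendsto_gaussianPDFReal_zero_one_atTop :
    Tendsto (gaussianPDFReal 0 1) atTop (nhds 0) := by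
  simp only [funext gaussianPDFReal_zero_one]
  have : Tendsto (fun u : ℝ => -u ^ 2 / 2) atTop atBot := by
    simp only [neg_div]
    exact tendsto_neg_atBot_iff.2 ((tendsto_pow_atTop two_ne_zero).atTop_div_const two_pos)
  simpa using (tendsto_exp_atBot.comp this).const_mul (√(2 * π))⁻¹

lemma ofReal_mul_le_gaussianReal_Ioc {μ k a b : ℝ} {v : NNReal} (hv : v ≠ 0) (hk : 0 ≤ k)
    (h : ∀ u ∈ Ioc a b, k ≤ gaussianPDFReal μ v u) :
    ENNReal.ofReal (k * (b - a)) ≤ gaussianReal μ v (Ioc a b) := by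
  rw [gaussianReal_apply μ hv, ENNReal.ofReal_mul hk, ← Real.volume_Ioc, ← setLIntegral_const]
  exact setLIntegral_mono (measurable_gaussianPDF μ v) fun u hu =>
    ENNReal.ofReal_le_ofReal (h u hu)

lemma ofReal_mul_le_gaussianReal_Ioc_zero {μ δ : ℝ} (hδ : δ ≤ μ) :
    ENNReal.ofReal (gaussianPDFReal 0 1 μ * δ) ≤ gaussianReal μ 1 (Ioc 0 δ) := by
  have h := ofReal_mul_le_gaussianReal_Ioc (μ := μ) (a := 0) (b := δ) one_ne_zero
    (gaussianPDFReal_nonneg 0 1 μ) fun u hu => by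
      rw [← zero_add μ, ← gaussianPDFReal_sub, zero_add]
      refine gaussianPDFReal_zero_one_le_of_abs_le ?_
      rw [abs_of_pos (hu.1.trans_le (hu.2.trans hδ))]
      exact abs_le.2 ⟨by linarith [hu.1], by linarith [hu.1, hu.2]⟩
  rwa [sub_zero] at h

lemma gaussianReal_Ioi_le {x : ℝ} (hx : 0 < x) :
    gaussianReal 0 1 (Ioi x) ≤ ENNReal.ofReal (gaussianPDFReal 0 1 x / x) := by
  have hderiv : ∀ u ∈ Ici x, HasDerivAt (fun u => -gaussianPDFReal 0 1 u)
      (u * gaussianPDFReal 0 1 u) u := fun u _ => hasDerivAt_neg_gaussianPDFReal_zero_one u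
  have hnonneg : ∀ u ∈ Ioi x, 0 ≤ u * gaussianPDFReal 0 1 u :=
    fun u hu => mul_nonneg (hx.trans hu).le (gaussianPDFReal_nonneg _ _ _)
  have hlim : Tendsto (fun u => -gaussianPDFReal 0 1 u) atTop (nhds 0) := by
    simpa using tendsto_gaussianPDFReal_zero_one_atTop.neg
  rw [gaussianReal_apply_eq_integral 0 one_ne_zero]
  refine ENNReal.ofReal_le_ofReal ?_
  calc ∫ u in Ioi x, gaussianPDFReal 0 1 u
      ≤ ∫ u in Ioi x, x⁻¹ * (u * gaussianPDFReal 0 1 u) := by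
        refine setIntegral_mono_on (integrable_gaussianPDFReal 0 1).integrableOn
          ((integrableOn_Ioi_deriv_of_nonneg' hderiv hnonneg hlim).const_mul _)
          measurableSet_Ioi fun u hu => ?_
        rw [← mul_assoc]
        refine le_mul_of_one_le_left (gaussianPDFReal_nonneg _ _ _) ?_
        rw [inv_mul_eq_div, one_le_div hx]
        exact le_of_lt hu
    _ = gaussianPDFReal 0 1 x / x := by
        rw [integral_const_mul, integral_Ioi_of_hasDerivAt_of_nonneg' hderiv hnonneg hlim]
        ring

lemma gaussianReal_setOf_lt_abs_le {x : ℝ} (hx : 0 < x) :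
    gaussianReal 0 1 {u | x < |u|} ≤ ENNReal.ofReal (2 * (gaussianPDFReal 0 1 x / x)) := by
  have hsplit : {u : ℝ | x < |u|} = (fun u => -u) ⁻¹' Ioi x ∪ Ioi x := by
    ext u
    simp only [mem_ofPred_eq, mem_union, mem_preimage, mem_Ioi, lt_abs, or_comm]
  have hneg : gaussianReal 0 1 ((fun u => -u) ⁻¹' Ioi x) = gaussianReal 0 1 (Ioi x) := by
    rw [← Measure.map_apply measurable_neg measurableSet_Ioi, gaussianReal_map_neg, neg_zero]
  have hnonneg := div_nonneg (gaussianPDFReal_nonneg 0 1 x) hx.le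
  calc gaussianReal 0 1 {u | x < |u|}
      ≤ gaussianReal 0 1 ((fun u => -u) ⁻¹' Ioi x) + gaussianReal 0 1 (Ioi x) :=
        hsplit ▸ measure_union_le _ _
    _ ≤ ENNReal.ofReal (gaussianPDFReal 0 1 x / x)
          + ENNReal.ofReal (gaussianPDFReal 0 1 x / x) := by
        rw [hneg]
        exact add_le_add (gaussianReal_Ioi_le hx) (gaussianReal_Ioi_le hx)
    _ = ENNReal.ofReal (2 * (gaussianPDFReal 0 1 x / x)) := by
        rw [two_mul, ENNReal.ofReal_add hnonneg hnonneg]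

/-- The mass of `(x, x + 1/x]` alone already gives this. -/
lemma ofReal_le_gaussianReal_Ioi {x : ℝ} (hx : 1 ≤ x) :
    ENNReal.ofReal (exp (-(3 / 2)) * gaussianPDFReal 0 1 x / x) ≤ gaussianReal 0 1 (Ioi x) := by
  have hx0 : 0 < x := one_pos.trans_le hx
  have hdens : exp (-(3 / 2)) * gaussianPDFReal 0 1 x ≤ gaussianPDFReal 0 1 (x + x⁻¹) := by
    have hinv : x⁻¹ ≤ 1 := inv_le_one_of_one_le₀ hx
    have : x * x⁻¹ = 1 := mul_inv_cancel₀ hx0.ne'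
    rw [gaussianPDFReal_zero_one, gaussianPDFReal_zero_one, mul_left_comm, ← exp_add]
    gcongr
    nlinarith [inv_nonneg.2 hx0.le]
  calc ENNReal.ofReal (exp (-(3 / 2)) * gaussianPDFReal 0 1 x / x)
      ≤ ENNReal.ofReal (gaussianPDFReal 0 1 (x + x⁻¹) * (x + x⁻¹ - x)) := by
        rw [add_sub_cancel_left, ← div_eq_mul_inv]
        gcongr
    _ ≤ gaussianReal 0 1 (Ioc x (x + x⁻¹)) :=
        ofReal_mul_le_gaussianReal_Ioc one_ne_zero (gaussianPDFReal_nonneg _ _ _)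
          fun u hu => gaussianPDFReal_zero_one_le_of_abs_le <| by
            rw [abs_of_pos (hx0.trans hu.1), abs_of_pos (by positivity)]
            exact hu.2
    _ ≤ gaussianReal 0 1 (Ioi x) := measure_mono Ioc_subset_Ioi_self

end StandardGaussian

section TailEvent

def tailEvent (a b m x : ℝ) : Set (ℝ × ℝ) := {p | |a * p.1 + b * p.2| - m * |p.2| > x}

variable {a b m t : ℝ}

lemma measurableSet_tailEvent (x : ℝ) : MeasurableSet (tailEvent a b m x) :=
  measurableSet_lt measurable_const (by fun_prop)

lemma preimage_tailEvent_subset (ha : 0 < a) (hb : 0 ≤ b) (x v : ℝ) :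
    (fun u => (u, v)) ⁻¹' tailEvent a b m x ⊆ {u | (x + (m - b) * |v|) / a < |u|} := by
  intro u (hu : x < |a * u + b * v| - m * |v|)
  have h : |a * u + b * v| ≤ a * |u| + b * |v| := by
    simpa [abs_mul, abs_of_pos ha, abs_of_nonneg hb] using abs_add_le (a * u) (b * v)
  change (x + (m - b) * |v|) / a < |u|
  rw [div_lt_iff₀ ha]
  linarith

lemma Ioi_prod_Ioc_subset_tailEvent (ha : 0 < a) (hb : 0 ≤ b) (hm : 0 ≤ m) (x δ : ℝ) :
    Ioi ((x + m * δ) / a) ×ˢ Ioc 0 δ ⊆ tailEvent a b m x := by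
  rintro ⟨u, v⟩ ⟨hu, hv0, hvδ⟩
  change (x + m * δ) / a < u at hu
  change x < |a * u + b * v| - m * |v|
  rw [div_lt_iff₀ ha] at hu
  rw [abs_of_pos hv0]
  linarith [le_abs_self (a * u + b * v), mul_nonneg hb hv0.le, mul_le_mul_of_nonneg_left hvδ hm]

lemma tail_exponent_le (ha : a ≠ 0) {S : ℝ} (hmS : 0 ≤ m * S) (α v : ℝ) :
    (t ^ 2 / a ^ 2 + m ^ 2) * S ^ 2 / 2 + (α * t - a ^ 2 * m) / a ^ 2 * S * |v|
      ≤ ((t * S + α * |v|) / a) ^ 2 / 2 + (v - m * S) ^ 2 / 2 := by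
  have hgap : ((t * S + α * |v|) / a) ^ 2 / 2 + (v - m * S) ^ 2 / 2
      - ((t ^ 2 / a ^ 2 + m ^ 2) * S ^ 2 / 2 + (α * t - a ^ 2 * m) / a ^ 2 * S * |v|)
      = (α * |v| / a) ^ 2 / 2 + v ^ 2 / 2 + m * S * (|v| - v) := by
    field_simp
    ring
  nlinarith [sq_nonneg (α * |v| / a), sq_nonneg v,
    mul_nonneg hmS (sub_nonneg.2 (le_abs_self v))]

lemma gaussianPDFReal_mul_tail_le (ha : 0 < a) (hm : 0 ≤ m) (ht : 0 < t) {S α : ℝ} (hS : 0 < S)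
    (hα : 0 ≤ α) (v : ℝ) :
    gaussianPDFReal (m * S) 1 v
        * (2 * (gaussianPDFReal 0 1 ((t * S + α * |v|) / a) / ((t * S + α * |v|) / a)))
      ≤ 2 * (a / (t * S)) * (√(2 * π))⁻¹ ^ 2 * exp (-(t ^ 2 / a ^ 2 + m ^ 2) * S ^ 2 / 2)
        * exp (-((α * t - a ^ 2 * m) / a ^ 2 * S) * |v|) := by
  have hx_ge : t * S / a ≤ (t * S + α * |v|) / a := by gcongr; nlinarith [abs_nonneg v]
  set x := (t * S + α * |v|) / a
  have hinv : x⁻¹ ≤ a / (t * S) := by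
    rw [inv_le_comm₀ ((by positivity : 0 < t * S / a).trans_le hx_ge) (by positivity), inv_div]
    exact hx_ge
  have hexp := tail_exponent_le (t := t) ha.ne' (mul_nonneg hm hS.le) α v
  rw [← zero_add (m * S), ← gaussianPDFReal_sub, gaussianPDFReal_zero_one,
    gaussianPDFReal_zero_one]
  calc (√(2 * π))⁻¹ * exp (-(v - m * S) ^ 2 / 2)
        * (2 * ((√(2 * π))⁻¹ * exp (-x ^ 2 / 2) / x))
      = 2 * x⁻¹ * (√(2 * π))⁻¹ ^ 2 * exp (-x ^ 2 / 2 + -(v - m * S) ^ 2 / 2) := by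
        rw [exp_add]; ring
    _ ≤ 2 * (a / (t * S)) * (√(2 * π))⁻¹ ^ 2
          * exp (-(t ^ 2 / a ^ 2 + m ^ 2) * S ^ 2 / 2
            + -((α * t - a ^ 2 * m) / a ^ 2 * S) * |v|) := by
        gcongr 2 * ?_ * _ * exp ?_
        linarith
    _ = _ := by rw [exp_add]; ring

lemma prod_gaussianReal_tailEvent_le (ha : 0 < a) (hb : 0 ≤ b) (hm : 0 ≤ m)
    (hpyth : a ^ 2 + b ^ 2 = m ^ 2) (ht : m * (m + b) < t) :
    ∃ C, 0 < C ∧ ∀ S, 0 < S →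
      ((gaussianReal 0 1).prod (gaussianReal (m * S) 1)) (tailEvent a b m (t * S))
        ≤ ENNReal.ofReal (C / S ^ 2 * exp (-(t ^ 2 / a ^ 2 + m ^ 2) * S ^ 2 / 2)) := by
  have hbm : b < m := by nlinarith
  have ht0 : 0 < t := by nlinarith
  set κ := ((m - b) * t - a ^ 2 * m) / a ^ 2
  have hκ : 0 < κ := div_pos (by nlinarith [mul_lt_mul_of_pos_left ht (sub_pos.2 hbm)])
    (by positivity)
  refine ⟨2 * a / (π * t * κ), by positivity, fun S hS => ?_⟩
  set K := 2 * (a / (t * S)) * (√(2 * π))⁻¹ ^ 2 * exp (-(t ^ 2 / a ^ 2 + m ^ 2) * S ^ 2 / 2)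
    with hK_def
  have hK : 0 ≤ K := by positivity
  set E := tailEvent a b m (t * S)
  have hpoint (v : ℝ) : gaussianPDF (m * S) 1 v * gaussianReal 0 1 ((fun u => (u, v)) ⁻¹' E)
      ≤ ENNReal.ofReal K * ENNReal.ofReal (exp (-(κ * S) * |v|)) := by
    have hx : 0 < (t * S + (m - b) * |v|) / a := by
      have := mul_nonneg (sub_pos.2 hbm).le (abs_nonneg v)
      positivity
    grw [preimage_tailEvent_subset ha hb, gaussianReal_setOf_lt_abs_le hx, gaussianPDF,
      ← ENNReal.ofReal_mul (gaussianPDFReal_nonneg _ _ _), ← ENNReal.ofReal_mul hK]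
    exact ENNReal.ofReal_le_ofReal
      (gaussianPDFReal_mul_tail_le ha hm ht0 hS (sub_pos.2 hbm).le v)
  calc ((gaussianReal 0 1).prod (gaussianReal (m * S) 1)) E
      = ∫⁻ v, gaussianReal 0 1 ((fun u => (u, v)) ⁻¹' E) ∂gaussianReal (m * S) 1 :=
        Measure.prod_apply_symm (measurableSet_tailEvent _)
    _ ≤ ∫⁻ v, (gaussianPDF (m * S) 1
          * fun v => gaussianReal 0 1 ((fun u => (u, v)) ⁻¹' E)) v := by
        rw [gaussianReal_of_var_ne_zero _ one_ne_zero]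
        exact lintegral_withDensity_le_lintegral_mul _ (measurable_gaussianPDF _ _) _
    _ ≤ ∫⁻ v, ENNReal.ofReal K * ENNReal.ofReal (exp (-(κ * S) * |v|)) :=
        lintegral_mono hpoint
    _ = ENNReal.ofReal (K * (2 / (κ * S))) := by
        rw [lintegral_const_mul' _ _ ENNReal.ofReal_ne_top,
          lintegral_exp_neg_mul_abs (by positivity), ENNReal.ofReal_mul hK]
    _ = ENNReal.ofReal (2 * a / (π * t * κ) / S ^ 2
          * exp (-(t ^ 2 / a ^ 2 + m ^ 2) * S ^ 2 / 2)) := by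
        rw [hK_def, inv_pow, sq_sqrt (by positivity)]
        congr 1
        field_simp

lemma tail_rate_le_box_bound (ha : 0 < a) (hm : 0 < m) (ht : 0 < t) {S : ℝ} (hS : 1 ≤ S) :
    exp (-(3 / 2) - (2 * t * m + m ^ 2) / (2 * a ^ 2)) * a / (2 * π) / (t + m) / S ^ 2
        * exp (-(t ^ 2 / a ^ 2 + m ^ 2) * S ^ 2 / 2)
      ≤ exp (-(3 / 2)) * gaussianPDFReal 0 1 ((t * S + m * S⁻¹) / a)
          / ((t * S + m * S⁻¹) / a)
        * (gaussianPDFReal 0 1 (m * S) * S⁻¹) := by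
  have hS0 : 0 < S := one_pos.trans_le hS
  have hmS : m * S⁻¹ ≤ m := mul_le_of_le_one_right hm.le (inv_le_one_of_one_le₀ hS)
  have hx_le : (t * S + m * S⁻¹) / a ≤ (t + m) * S / a := by
    gcongr
    nlinarith [le_mul_of_one_le_right hm.le hS]
  have hx_sq : ((t * S + m * S⁻¹) / a) ^ 2 ≤ (t ^ 2 * S ^ 2 + 2 * t * m + m ^ 2) / a ^ 2 := by
    rw [div_pow]
    gcongr
    have : t * S * (m * S⁻¹) = t * m := by field_simp
    nlinarith [mul_le_mul hmS hmS (by positivity) hm.le]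
  set x := (t * S + m * S⁻¹) / a
  have hexp : exp (-(3 / 2) - (2 * t * m + m ^ 2) / (2 * a ^ 2))
        * exp (-(t ^ 2 / a ^ 2 + m ^ 2) * S ^ 2 / 2)
      = exp (-(3 / 2))
        * exp (-((t ^ 2 * S ^ 2 + 2 * t * m + m ^ 2) / a ^ 2) / 2 + -(m * S) ^ 2 / 2) := by
    rw [← exp_add, ← exp_add]
    congr 1
    field_simp
    ring
  calc _ = exp (-(3 / 2)) * (√(2 * π))⁻¹ ^ 2 * (a / ((t + m) * S)) * S⁻¹
          * exp (-((t ^ 2 * S ^ 2 + 2 * t * m + m ^ 2) / a ^ 2) / 2 + -(m * S) ^ 2 / 2) := by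
        rw [inv_pow, sq_sqrt (by positivity), ← div_div a]
        linear_combination (a / (2 * π) / (t + m) / S ^ 2) * hexp
    _ ≤ exp (-(3 / 2)) * (√(2 * π))⁻¹ ^ 2 * x⁻¹ * S⁻¹
          * exp (-x ^ 2 / 2 + -(m * S) ^ 2 / 2) := by
        gcongr ?_ * exp ?_
        · gcongr
          rw [le_inv_comm₀ (by positivity) (by positivity), inv_div]
          exact hx_le
        · linarith
    _ = _ := by
        rw [gaussianPDFReal_zero_one, gaussianPDFReal_zero_one, exp_add]
        ring

lemma ofReal_le_prod_gaussianReal_tailEvent (ha : 0 < a) (hb : 0 ≤ b) (hm : 0 < m)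
    (ht : 0 < t) :
    ∃ c, 0 < c ∧ ∀ᶠ S in atTop,
      ENNReal.ofReal (c / S ^ 2 * exp (-(t ^ 2 / a ^ 2 + m ^ 2) * S ^ 2 / 2))
        ≤ ((gaussianReal 0 1).prod (gaussianReal (m * S) 1)) (tailEvent a b m (t * S)) := by
  refine ⟨exp (-(3 / 2) - (2 * t * m + m ^ 2) / (2 * a ^ 2)) * a / (2 * π) / (t + m),
    by positivity, ?_⟩
  filter_upwards [eventually_ge_atTop 1, eventually_ge_atTop (a / t), eventually_ge_atTop m⁻¹]
    with S hS1 hSa hSm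
  have hS0 : 0 < S := one_pos.trans_le hS1
  set x := (t * S + m * S⁻¹) / a
  have hx1 : 1 ≤ x := by
    rw [le_div_iff₀ ha, one_mul]
    linarith [(div_le_iff₀ ht).1 hSa, mul_pos hm (inv_pos.2 hS0)]
  have hδ : S⁻¹ ≤ m * S :=
    (inv_le_of_inv_le₀ hm hSm).trans (le_mul_of_one_le_right hm.le hS1)
  have hnonneg : 0 ≤ exp (-(3 / 2)) * gaussianPDFReal 0 1 x / x :=
    div_nonneg (mul_nonneg (exp_pos _).le (gaussianPDFReal_nonneg _ _ _)) (by positivity)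
  calc _ ≤ ENNReal.ofReal (exp (-(3 / 2)) * gaussianPDFReal 0 1 x / x)
        * ENNReal.ofReal (gaussianPDFReal 0 1 (m * S) * S⁻¹) := by
        rw [← ENNReal.ofReal_mul hnonneg]
        exact ENNReal.ofReal_le_ofReal (tail_rate_le_box_bound ha hm ht hS1)
    _ ≤ gaussianReal 0 1 (Ioi x) * gaussianReal (m * S) 1 (Ioc 0 S⁻¹) :=
        mul_le_mul' (ofReal_le_gaussianReal_Ioi hx1) (ofReal_mul_le_gaussianReal_Ioc_zero hδ)
    _ = ((gaussianReal 0 1).prod (gaussianReal (m * S) 1)) (Ioi x ×ˢ Ioc 0 S⁻¹) :=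
        (Measure.prod_prod _ _).symm
    _ ≤ _ := measure_mono (Ioi_prod_Ioc_subset_tailEvent ha hb hm.le _ _)

end TailEvent

lemma div_two_div_log_mul_rpow_eq {x : ℝ} (hx : 1 < x) (k q r : ℝ) :
    k / 2 / log x * x ^ (-q / r)
      = k / √(2 * log x) ^ 2 * exp (-(q / r) * √(2 * log x) ^ 2 / 2) := by
  have hlog : 0 < log x := log_pos hx
  rw [rpow_def_of_pos (one_pos.trans hx), sq_sqrt (by positivity)]
  field_simp

theorem null_tail_asymptotics (r s t : ℝ) (hr : 0 < r) (hs : 0 < s)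
    (ht : t > r + s + Real.sqrt s * Real.sqrt (r + s)) :
    ∃ c C : ℝ, 0 < c ∧ 0 < C ∧
      ∀ᶠ (n : ℕ) in Filter.atTop,
        ENNReal.ofReal
            (c / Real.log n * (n : ℝ) ^ (-(t ^ 2 + r * (r + s)) / r)) ≤
          ((gaussianReal 0 1).prod
              (gaussianReal (Real.sqrt (2 * (r + s) * Real.log n)) 1))
            {p : ℝ × ℝ |
              |Real.sqrt r * p.1 + Real.sqrt s * p.2| - Real.sqrt (r + s) * |p.2| >
                t * Real.sqrt (2 * Real.log n)} ∧
        ((gaussianReal 0 1).prod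
              (gaussianReal (Real.sqrt (2 * (r + s) * Real.log n)) 1))
            {p : ℝ × ℝ |
              |Real.sqrt r * p.1 + Real.sqrt s * p.2| - Real.sqrt (r + s) * |p.2| >
                t * Real.sqrt (2 * Real.log n)} ≤
          ENNReal.ofReal
            (C / Real.log n * (n : ℝ) ^ (-(t ^ 2 + r * (r + s)) / r)) := by
  have hrs : 0 < r + s := add_pos hr hs
  have ht0 : 0 < t := by
    have := mul_nonneg (sqrt_nonneg s) (sqrt_nonneg (r + s))
    linarith
  have hpyth : √r ^ 2 + √s ^ 2 = √(r + s) ^ 2 := by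
    rw [sq_sqrt hr.le, sq_sqrt hs.le, sq_sqrt hrs.le]
  have ht' : √(r + s) * (√(r + s) + √s) < t := by
    rw [mul_add, mul_self_sqrt hrs.le, mul_comm]
    exact ht
  have hrate : (t ^ 2 + r * (r + s)) / r = t ^ 2 / √r ^ 2 + √(r + s) ^ 2 := by
    rw [sq_sqrt hr.le, sq_sqrt hrs.le]
    field_simp
  obtain ⟨c, hc, hlower⟩ := ofReal_le_prod_gaussianReal_tailEvent (sqrt_pos.2 hr)
    (sqrt_nonneg s) (sqrt_pos.2 hrs) ht0
  obtain ⟨C, hC, hupper⟩ := prod_gaussianReal_tailEvent_le (sqrt_pos.2 hr) (sqrt_nonneg s)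
    (sqrt_nonneg _) hpyth ht'
  have hlog : Tendsto (fun n : ℕ => log n) atTop atTop :=
    tendsto_log_atTop.comp tendsto_natCast_atTop_atTop
  refine ⟨c / 2, C / 2, by positivity, by positivity, ?_⟩
  filter_upwards [(tendsto_sqrt_atTop.comp (hlog.const_mul_atTop two_pos)).eventually hlower,
    eventually_gt_atTop 1] with n hlower_n hn
  have hn' : (1 : ℝ) < n := by exact_mod_cast hn
  rw [div_two_div_log_mul_rpow_eq hn', div_two_div_log_mul_rpow_eq hn', hrate,
    show 2 * (r + s) * log n = (r + s) * (2 * log n) by ring, sqrt_mul hrs.le]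
  exact ⟨hlower_n, hupper _ (sqrt_pos.2 (by linarith [log_pos hn']))⟩
end
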